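/- In SP_9, for every negative edge uv there exists a unique vertex z such that both uz and vz are negative edges. -/

import Mathlib

/-! Two vertices span a negative edge exactly when they differ in both coordinates, and
for distinct `a b : Fin 3` the one remaining value is `-(a + b)`, since `0 + 1 + 2 = 0` in
`Fin 3`. Hence the common negative neighbour of a negative edge `uv` is `-(u + v)`. -/

/-- Vertices of `SP_9`, identified with `{0,1,2} × {0,1,2}`. -/
abbrev V9 : Type := Fin 3 × Fin 3

/-- The edge `uv` of `SP_9` is positive: `u ≠ v` and they agree in exactly one coordinate. -/
abbrev pos9 (u v : V9) : Prop :=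
  (u.1 = v.1 ∧ u.2 ≠ v.2) ∨ (u.1 ≠ v.1 ∧ u.2 = v.2)

abbrev neg9 (u v : V9) : Prop := u ≠ v ∧ ¬ pos9 u v

theorem neg9_iff {u v : V9} : neg9 u v ↔ u.1 ≠ v.1 ∧ u.2 ≠ v.2 := by
  simp only [neg9, pos9, ne_eq, Prod.ext_iff]
  tauto

theorem Fin.three_ne_ne_iff_eq_neg_add {a b : Fin 3} (hab : a ≠ b) (c : Fin 3) :
    a ≠ c ∧ b ≠ c ↔ c = -(a + b) := by
  revert a b c
  decide

/-- For every negative edge `uv` of `SP_9` there is a unique vertex `z` with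
both `uz` and `vz` negative. -/
theorem sp9_neg_edge_unique_common_neg :
    ∀ u v : V9, neg9 u v → ∃! z : V9, neg9 u z ∧ neg9 v z := by
  intro u v huv
  rw [neg9_iff] at huv
  have common_neg_iff (z : V9) : neg9 u z ∧ neg9 v z ↔ z = -(u + v) := by
    simp only [neg9_iff, Prod.ext_iff, Prod.fst_neg, Prod.snd_neg, Prod.fst_add, Prod.snd_add,
      ← Fin.three_ne_ne_iff_eq_neg_add huv.1, ← Fin.three_ne_ne_iff_eq_neg_add huv.2]
    tauto
  exact ⟨-(u + v), (common_neg_iff _).2 rfl, fun z hz => (common_neg_iff z).1 hz⟩
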